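/- For all integers i ≥ 0 and n ≥ 2: (c i)²·ω^{−2i} < (c i)·ω / (2·√(n²−1)·(d (i+1))); equivalently, 2·√(n²−1)·(c i)·(d (i+1)) < ω^{2i+1} (in fact 2·√(n²−1)·(c i)·(d (i+1)) = ω^{2i+1} − ω^{−2i−1}). -/
import Mathlib


/-- The solution of x 0 = x0, x 1 = x1, x (i+2) = 2n·x (i+1) − x i. -/
def rec2 (n : ℕ) (x0 x1 : ℤ) : ℕ → ℤ
  | 0 => x0
  | 1 => x1
  | i + 2 => 2 * n * rec2 n x0 x1 (i + 1) - rec2 n x0 x1 i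

/-- c i : c 0 = 1, c 1 = 2n+1. -/
def sc (n : ℕ) : ℕ → ℤ := rec2 n 1 (2 * n + 1)
/-- d i : d 0 = 1, d 1 = 1. -/
def sd (n : ℕ) : ℕ → ℤ := rec2 n 1 1

/-- √(n²−1). -/
noncomputable def sqn (n : ℕ) : ℝ := Real.sqrt ((n : ℝ)^2 - 1)

/-- ω = n + √(n²−1). -/
noncomputable def om (n : ℕ) : ℝ := n + sqn n

lemma sqn_sq (n : ℕ) (hn : 2 ≤ n) : sqn n ^ 2 = (n : ℝ)^2 - 1 := by
  have h : (1:ℝ) ≤ (n:ℝ) := by exact_mod_cast Nat.one_le_of_lt hn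
  rw [sqn, Real.sq_sqrt]; nlinarith

lemma sqn_pos (n : ℕ) (hn : 2 ≤ n) : 0 < sqn n := by
  have h : (2:ℝ) ≤ (n:ℝ) := by exact_mod_cast hn
  exact Real.sqrt_pos.2 (by nlinarith)

lemma om_pos (n : ℕ) (hn : 2 ≤ n) : 0 < om n := by
  have h : (2:ℝ) ≤ (n:ℝ) := by exact_mod_cast hn
  have := sqn_pos n hn
  rw [om]; linarith

/-- General closed form for `rec2`. -/
lemma rec2_closed (n : ℕ) (hn : 2 ≤ n) (x0 x1 : ℤ) (α β : ℝ)
    (h0 : α + β = (x0 : ℝ))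
    (h1 : α * (↑n + sqn n) + β * (↑n - sqn n) = (x1 : ℝ)) :
    ∀ i, (rec2 n x0 x1 i : ℝ) = α * (↑n + sqn n) ^ i + β * (↑n - sqn n) ^ i := by
  have hs2 := sqn_sq n hn
  have key : ∀ i, ((rec2 n x0 x1 i : ℝ) = α * (↑n + sqn n) ^ i + β * (↑n - sqn n) ^ i)
      ∧ ((rec2 n x0 x1 (i+1) : ℝ) = α * (↑n + sqn n) ^ (i+1) + β * (↑n - sqn n) ^ (i+1)) := by
    intro i
    induction i with
    | zero =>
      constructor
      · simpa [rec2] using h0.symm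
      · simpa [rec2] using h1.symm
    | succ k ih =>
      refine ⟨ih.2, ?_⟩
      have hstep : (rec2 n x0 x1 (k+2) : ℝ)
          = 2 * n * (rec2 n x0 x1 (k+1) : ℝ) - (rec2 n x0 x1 k : ℝ) := by
        rw [show rec2 n x0 x1 (k+2) = 2 * n * rec2 n x0 x1 (k+1) - rec2 n x0 x1 k from rfl]
        push_cast; ring
      rw [hstep, ih.1, ih.2]
      linear_combination (-α * (↑n + sqn n)^k - β * (↑n - sqn n)^k) * hs2
  exact fun i => (key i).1

/-- Positivity and monotonicity. -/
lemma rec2_one_le (n : ℕ) (hn : 2 ≤ n) (x0 x1 : ℤ) (h0 : 1 ≤ x0) (h01 : x0 ≤ x1) :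
    ∀ i, 1 ≤ rec2 n x0 x1 i ∧ rec2 n x0 x1 i ≤ rec2 n x0 x1 (i+1) := by
  have hn' : (2:ℤ) ≤ (n:ℤ) := by exact_mod_cast hn
  intro i
  induction i with
  | zero => exact ⟨h0, by simpa [rec2] using h01⟩
  | succ k ih =>
    refine ⟨le_trans ih.1 ih.2, ?_⟩
    have hstep : rec2 n x0 x1 (k+2) = 2 * n * rec2 n x0 x1 (k+1) - rec2 n x0 x1 k := rfl
    rw [hstep]
    nlinarith [ih.1, ih.2]

lemma key_identity (n i : ℕ) (hn : 2 ≤ n) :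
    2 * sqn n * (sc n i : ℝ) * (sd n (i+1) : ℝ)
      = om n ^ (2*i+1) - (↑n - sqn n) ^ (2*i+1) := by
  have hs2 := sqn_sq n hn
  have hs := sqn_pos n hn
  set s := sqn n with hsdef
  have h2s : (2*s : ℝ) ≠ 0 := by positivity
  -- closed forms
  have hc : (sc n i : ℝ) = ((↑n + s + 1)/(2*s)) * (↑n + s) ^ i
      + (-(↑n - s + 1)/(2*s)) * (↑n - s) ^ i := by
    apply rec2_closed n hn 1 (2*n+1)
    · push_cast; field_simp; ring
    · push_cast; field_simp; ring
  have hd : (sd n (i+1) : ℝ) = ((1 - (↑n - s))/(2*s)) * (↑n + s) ^ (i+1)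
      + (-(1 - (↑n + s))/(2*s)) * (↑n - s) ^ (i+1) := by
    apply rec2_closed n hn 1 1
    · push_cast; field_simp; ring
    · push_cast; field_simp; ring
  have hc2 : 2 * s * (sc n i : ℝ)
      = (↑n + s + 1) * (↑n + s) ^ i - (↑n - s + 1) * (↑n - s) ^ i := by
    rw [hc]; field_simp; ring
  have hd2 : 2 * s * (sd n (i+1) : ℝ)
      = (1 - (↑n - s)) * (↑n + s) ^ (i+1) - (1 - (↑n + s)) * (↑n - s) ^ (i+1) := by
    rw [hd]; field_simp; ring
  have huv : ((↑n:ℝ) + s) ^ i * (↑n - s) ^ i = 1 := by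
    rw [← mul_pow]
    have h1 : (((↑n:ℝ)) + s) * (↑n - s) = 1 := by linear_combination -hs2
    rw [h1, one_pow]
  apply mul_left_cancel₀ h2s
  rw [om]
  linear_combination (2 * s * (sd n (i+1) : ℝ)) * hc2
    + ((↑n + s + 1) * (↑n + s) ^ i - (↑n - s + 1) * (↑n - s) ^ i) * hd2
    + (s * ((↑n + s) ^ i)^2 - s * ((↑n - s) ^ i)^2 - 2*↑n
        + ↑n * ((↑n - s) ^ i)^2 + ↑n * ((↑n + s) ^ i)^2) * hs2
    + (2*↑n^3 - 2*↑n*s^2 - 2*↑n) * huv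

theorem stmt_10 (n i : ℕ) (hn : 2 ≤ n) :
    (sc n i : ℝ) ^ 2 * om n ^ (-(2*(i:ℤ))) <
      (sc n i : ℝ) * om n / (2 * sqn n * (sd n (i+1) : ℝ)) ∧
    2 * sqn n * (sc n i : ℝ) * (sd n (i+1) : ℝ) < om n ^ (2*i+1) ∧
    2 * sqn n * (sc n i : ℝ) * (sd n (i+1) : ℝ) =
      om n ^ (2*i+1) - om n ^ (-(2*(i:ℤ)+1)) := by
  have hs2 := sqn_sq n hn
  have hs := sqn_pos n hn
  have hω := om_pos n hn
  have hn2 : (2:ℝ) ≤ (n:ℝ) := by exact_mod_cast hn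
  have hob_pos : (0:ℝ) < ↑n - sqn n := by
    rcases lt_or_ge (sqn n) (↑n : ℝ) with h | h
    · linarith
    · nlinarith
  have hprod : om n * (↑n - sqn n) = 1 := by
    rw [om]; linear_combination -hs2
  have hob : ((↑n : ℝ) - sqn n) = (om n)⁻¹ := (inv_eq_of_mul_eq_one_right hprod).symm
  have hinv : om n ^ (-(2*(i:ℤ)+1)) = ((↑n:ℝ) - sqn n) ^ (2*i+1) := by
    rw [show (-(2*(i:ℤ)+1)) = -((2*i+1 : ℕ) : ℤ) by push_cast; ring, zpow_neg, zpow_natCast,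
      ← inv_pow, ← hob]
  have h3 : 2 * sqn n * (sc n i : ℝ) * (sd n (i+1) : ℝ) =
      om n ^ (2*i+1) - om n ^ (-(2*(i:ℤ)+1)) := by
    rw [hinv]; exact key_identity n i hn
  have hobpow : (0:ℝ) < ((↑n:ℝ) - sqn n) ^ (2*i+1) := pow_pos hob_pos _
  have h2 : 2 * sqn n * (sc n i : ℝ) * (sd n (i+1) : ℝ) < om n ^ (2*i+1) := by
    rw [h3, hinv]; linarith
  refine ⟨?_, h2, h3⟩
  -- part 1
  have hc1 : (1:ℤ) ≤ sc n i := (rec2_one_le n hn 1 (2*n+1) le_rfl (by omega) i).1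
  have hd1 : (1:ℤ) ≤ sd n (i+1) := (rec2_one_le n hn 1 1 le_rfl le_rfl (i+1)).1
  have hcR : (1:ℝ) ≤ (sc n i : ℝ) := by exact_mod_cast hc1
  have hdR : (1:ℝ) ≤ (sd n (i+1) : ℝ) := by exact_mod_cast hd1
  have hinv2 : om n ^ (-(2*(i:ℤ))) = (om n ^ (2*i))⁻¹ := by
    rw [show (-(2*(i:ℤ))) = -((2*i : ℕ) : ℤ) by push_cast; ring, zpow_neg, zpow_natCast]
  have hden : (0:ℝ) < 2 * sqn n * (sd n (i+1) : ℝ) := by nlinarith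
  rw [hinv2, ← div_eq_mul_inv, div_lt_div_iff₀ (pow_pos hω _) hden]
  calc (sc n i : ℝ)^2 * (2 * sqn n * (sd n (i+1) : ℝ))
      = (sc n i : ℝ) * (2 * sqn n * (sc n i : ℝ) * (sd n (i+1) : ℝ)) := by ring
    _ < (sc n i : ℝ) * om n ^ (2*i+1) := by
        apply mul_lt_mul_of_pos_left h2 (by linarith)
    _ = (sc n i : ℝ) * om n * om n ^ (2*i) := by rw [pow_succ]; ring
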